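/- Let G be a finite group with Nat.card G ≤ 3^6 = 729 such that g^3 = 1 for every g ∈ G. Then the commutator subgroup ⁅G,G⁆ is contained in the center of G; in particular G is nilpotent of class at most 2. -/

import Mathlib

/-!
In a group of exponent 3 any two conjugates of an element commute, so the normal closure of every
element is abelian. Hence `⁅x, y⁆` commutes with `y`, and then `⁅x, y⁆` commutes with `z` as soon
as `⁅x, z⁆` commutes with `y`.

Suppose `c = ⁅⁅x, y⁆, z⁆ ≠ 1`. In the sequence `c, ⁅x, y⁆, ⁅x, z⁆, ⁅y, z⁆, x, y, z`, each term
after the first fails to commute with an element (`z, y, x, ⁅y, z⁆, ⁅x, z⁆, ⁅x, y⁆` respectively)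
that commutes with all earlier terms, because any two of them lying in a common normal closure
`⟨⟨x⟩⟩`, `⟨⟨y⟩⟩` or `⟨⟨z⟩⟩` commute. So the subgroups generated by the initial segments form a
strictly increasing chain of length 7 in a 3-group, and `3 ^ 7 ≤ |G|`.
-/

section

open Subgroup
open scoped commutatorElement

variable {G : Type*} [Group G]

theorem IsPGroup.mul_card_le_card_of_lt {p : ℕ} [Fact p.Prime] [Finite G] (hG : IsPGroup p G)
    {H K : Subgroup G} (hHK : H < K) : p * Nat.card H ≤ Nat.card K := by
  obtain ⟨a, ha⟩ := IsPGroup.iff_card.mp (hG.to_subgroup H)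
  obtain ⟨b, hb⟩ := IsPGroup.iff_card.mp (hG.to_subgroup K)
  have hab : a < b := by
    have : Nat.card H < Nat.card K := Set.card_strictMono (SetLike.coe_strictMono hHK)
    exact (Nat.pow_lt_pow_iff_right (Fact.out : p.Prime).one_lt).mp (ha ▸ hb ▸ this)
  rw [ha, hb, ← pow_succ']
  exact Nat.pow_le_pow_right (Fact.out : p.Prime).pos hab

theorem Subgroup.closure_lt_closure_insert {S : Set G} {g : G} (hg : g ∉ closure S) :
    closure S < closure (insert g S) :=
  SetLike.lt_iff_le_and_exists.mpr
    ⟨closure_mono (Set.subset_insert g S), g, subset_closure (Set.mem_insert g S), hg⟩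

theorem Subgroup.notMem_closure_of_commute {S : Set G} {t g : G}
    (hS : ∀ s ∈ S, Commute t s) (hg : ¬Commute t g) : g ∉ closure S := fun hgS =>
  hg (mem_centralizer_singleton_iff.mp
    ((closure_le _).mpr (fun s hs => mem_centralizer_singleton_iff.mpr (hS s hs).eq.symm) hgS)).symm

theorem IsPGroup.mul_card_closure_le_card_closure_insert {p : ℕ} [Fact p.Prime] [Finite G]
    (hG : IsPGroup p G) {S : Set G} {g : G} (hg : g ∉ closure S) :
    p * Nat.card (closure S) ≤ Nat.card (closure (insert g S)) :=
  hG.mul_card_le_card_of_lt (closure_lt_closure_insert hg)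

theorem Subgroup.commutatorElement_mem_of_mem_left {N : Subgroup G} [N.Normal] {p : G}
    (hp : p ∈ N) (q : G) : ⁅p, q⁆ ∈ N :=
  commutator_le_left N ⊤ (commutator_mem_commutator hp (mem_top q))

theorem Subgroup.commutatorElement_mem_of_mem_right {N : Subgroup G} [N.Normal] (p : G) {q : G}
    (hq : q ∈ N) : ⁅p, q⁆ ∈ N :=
  commutator_le_right ⊤ N (commutator_mem_commutator (mem_top p) hq)

namespace ExponentThree

theorem mul_mul_eq_inv_mul_inv_mul_inv (hexp : ∀ g : G, g ^ 3 = 1) (x y : G) :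
    x * y * x = y⁻¹ * x⁻¹ * y⁻¹ := by
  rw [← mul_inv_eq_one, ← hexp (x * y), pow_three]
  group

theorem commute_conj (hexp : ∀ g : G, g ^ 3 = 1) (x y : G) : Commute x (y * x * y⁻¹) := by
  have hy : y * y = y⁻¹ := by rw [eq_inv_iff_mul_eq_one, ← hexp y, pow_three, mul_assoc]
  have hy' : y⁻¹ * y⁻¹ = y := by rw [← mul_inv_rev, hy, inv_inv]
  have hleft : x * (y * x * y⁻¹) = y⁻¹ * x⁻¹ * y := calc
    _ = x * y * x * y⁻¹ := by group
    _ = y⁻¹ * x⁻¹ * (y⁻¹ * y⁻¹) := by rw [mul_mul_eq_inv_mul_inv_mul_inv hexp]; group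
    _ = _ := by rw [hy']
  have hright : y * x * y⁻¹ * x = y⁻¹ * x⁻¹ * y := calc
    _ = y * (x * y⁻¹ * x) := by group
    _ = y * y * x⁻¹ * y := by rw [mul_mul_eq_inv_mul_inv_mul_inv hexp, inv_inv]; group
    _ = _ := by rw [hy]
  exact hleft.trans hright.symm

theorem commute_conj_conj (hexp : ∀ g : G, g ^ 3 = 1) (a g h : G) :
    Commute (g * a * g⁻¹) (h * a * h⁻¹) := by
  simpa [mul_assoc] using (commute_conj hexp a (g⁻¹ * h)).map (MulAut.conj g).toMonoidHom

theorem commute_of_mem_normalClosure (hexp : ∀ g : G, g ^ 3 = 1) {a u v : G}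
    (hu : u ∈ normalClosure {a}) (hv : v ∈ normalClosure {a}) : Commute u v := by
  have : IsMulCommutative (normalClosure {a}) := by
    refine isMulCommutative_closure fun x hx y hy => ?_
    obtain ⟨_, rfl, hax⟩ := Group.mem_conjugatesOfSet_iff.mp hx
    obtain ⟨_, rfl, hay⟩ := Group.mem_conjugatesOfSet_iff.mp hy
    obtain ⟨g, rfl⟩ := isConj_iff.mp hax
    obtain ⟨h, rfl⟩ := isConj_iff.mp hay
    exact commute_conj_conj hexp _ g h
  exact setLike_mul_comm hu hv

theorem commute_commutatorElement_right (hexp : ∀ g : G, g ^ 3 = 1) (a b : G) :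
    Commute ⁅a, b⁆ b :=
  have hb : b ∈ normalClosure {b} := subset_normalClosure (Set.mem_singleton b)
  commute_of_mem_normalClosure hexp (commutatorElement_mem_of_mem_right a hb) hb

theorem commute_commutatorElement_of_commute (hexp : ∀ g : G, g ^ 3 = 1) {x y z : G}
    (h : Commute ⁅x, z⁆ y) : Commute ⁅x, y⁆ z := by
  have hmul : ⁅x, y * z⁆ = ⁅x, y⁆ * ⁅x, z⁆ := calc
    ⁅x, y * z⁆ = ⁅x, y⁆ * (y * ⁅x, z⁆ * y⁻¹) := by simp only [commutatorElement_def]; group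
    _ = ⁅x, y⁆ * ⁅x, z⁆ := by rw [h.symm.mul_inv_cancel]
  have hy : Commute (⁅x, y⁆ * ⁅x, z⁆) y := (commute_commutatorElement_right hexp x y).mul_left h
  have hyz : Commute (⁅x, y⁆ * ⁅x, z⁆) (y * z) := hmul ▸ commute_commutatorElement_right hexp x _
  have hz : Commute (⁅x, y⁆ * ⁅x, z⁆) z := by
    simpa only [inv_mul_cancel_left] using hy.inv_right.mul_right hyz
  simpa only [mul_inv_cancel_right] using
    hz.mul_left (commute_commutatorElement_right hexp x z).inv_left

theorem pow_seven_le_card_of_not_commute [Finite G] (hexp : ∀ g : G, g ^ 3 = 1) {x y z : G}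
    (hxyz : ¬Commute ⁅x, y⁆ z) : 3 ^ 7 ≤ Nat.card G := by
  set β := ⁅x, y⁆
  set δ := ⁅x, z⁆
  set ε := ⁅y, z⁆
  set c := ⁅β, z⁆
  have hyδ : ¬Commute y δ := fun h => hxyz (commute_commutatorElement_of_commute hexp h.symm)
  have hxε : ¬Commute x ε := fun h => hxyz <| by
    simpa using (commute_commutatorElement_of_commute hexp h.symm).inv_left
  have hx : x ∈ normalClosure {x} := subset_normalClosure rfl
  have hy : y ∈ normalClosure {y} := subset_normalClosure rfl
  have hz : z ∈ normalClosure {z} := subset_normalClosure rfl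
  have hβx := commutatorElement_mem_of_mem_left hx y
  have hβy := commutatorElement_mem_of_mem_right x hy
  have hδx := commutatorElement_mem_of_mem_left hx z
  have hδz := commutatorElement_mem_of_mem_right x hz
  have hεy := commutatorElement_mem_of_mem_left hy z
  have hεz := commutatorElement_mem_of_mem_right y hz
  have hcx := commutatorElement_mem_of_mem_left hβx z
  have hcy := commutatorElement_mem_of_mem_left hβy z
  have hcz := commutatorElement_mem_of_mem_right β hz
  have hG : IsPGroup 3 G := fun g => ⟨1, by simpa using hexp g⟩
  have step {S : Set G} {g : G} (t : G) (hS : ∀ s ∈ S, Commute t s) (hg : ¬Commute t g) :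
      3 * Nat.card (closure S) ≤ Nat.card (closure (insert g S)) :=
    hG.mul_card_closure_le_card_closure_insert (notMem_closure_of_commute hS hg)
  have CC {a u v : G} : u ∈ normalClosure {a} → v ∈ normalClosure {a} → Commute u v :=
    commute_of_mem_normalClosure hexp
  have h1 := hG.mul_card_closure_le_card_closure_insert (S := ∅) (g := c) <| by
    rw [Subgroup.closure_empty, mem_bot]
    exact mt commutatorElement_eq_one_iff_commute.mp hxyz
  rw [Subgroup.closure_empty, card_bot, insert_empty_eq] at h1
  have h2 := step (S := {c}) (g := β) z (by simpa using CC hz hcz) (fun h => hxyz h.symm)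
  have h3 := step (S := {β, c}) (g := δ) y (by simpa using ⟨CC hy hβy, CC hy hcy⟩) hyδ
  have h4 := step (S := {δ, β, c}) (g := ε) x
    (by simpa using ⟨CC hx hδx, CC hx hβx, CC hx hcx⟩) hxε
  have h5 := step (S := {ε, δ, β, c}) (g := x) ε
    (by simpa using ⟨CC hεz hδz, CC hεy hβy, CC hεy hcy⟩) fun h => hxε h.symm
  have h6 := step (S := {x, ε, δ, β, c}) (g := y) δ
    (by simpa using ⟨CC hδx hx, CC hδz hεz, CC hδx hβx, CC hδx hcx⟩) fun h => hyδ h.symm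
  have h7 := step (S := {y, x, ε, δ, β, c}) (g := z) β
    (by simpa using ⟨CC hβy hy, CC hβx hx, CC hβy hεy, CC hβx hδx, CC hβx hcx⟩) hxyz
  have h8 := card_le_card_group (closure {z, y, x, ε, δ, β, c})
  omega

theorem commutator_le_center [Finite G] (hcard : Nat.card G ≤ 3 ^ 6)
    (hexp : ∀ g : G, g ^ 3 = 1) : commutator G ≤ center G := by
  rw [commutator_def, commutator_le]
  intro x _ y _
  refine mem_center_iff.mpr fun z => (?_ : Commute z ⁅x, y⁆).eq
  by_contra hzxy
  have := pow_seven_le_card_of_not_commute hexp fun h => hzxy h.symm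
  omega

end ExponentThree

end

/-- Let `G` be a finite group with `Nat.card G ≤ 3 ^ 6` such that `g ^ 3 = 1` for every
`g ∈ G`. Then `⁅G,G⁆` is contained in the center of `G`; in particular `G` is nilpotent of
class at most 2. -/
theorem exponent_three_small_order_class_two
    (G : Type*) [Group G] [Finite G]
    (hcard : Nat.card G ≤ 3 ^ 6) (hexp : ∀ g : G, g ^ 3 = 1) :
    commutator G ≤ Subgroup.center G ∧
      ∃ h : Group.IsNilpotent G, Group.nilpotencyClass G ≤ 2 := by
  have hcenter := ExponentThree.commutator_le_center hcard hexp
  have hbot : (⊤ : Subgroup G).lowerCentralSeries 2 = ⊥ :=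
    Subgroup.lowerCentralSeries_succ_eq_bot ⊤ hcenter
  have : Group.IsNilpotent G := Subgroup.nilpotent_iff_lowerCentralSeries.mpr ⟨2, hbot⟩
  exact ⟨hcenter, this, Subgroup.lowerCentralSeries_eq_bot_iff_nilpotencyClass_le.mp hbot⟩
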